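/- arXiv:1503.03543 — 6 statements merged into one kernel-verified Lean document; each statement's English description precedes it below -/
import Mathlib

section
/- Under the set Υ of conditions, the Newton sequence x_{k+1} = x_k − (F'(x_k))⁻¹ F(x_k) started at x₀ is well defined (in particular F'(x_k) is invertible for every k ≥ 0), all its members remain in the closed ball B̄(x₀, v₁*), and it converges to a point x* satisfying F(x*) = 0. Moreover the majorization estimates ‖x_{k+1} − x_k‖ ≤ v_{k+1} − v_k and ‖x* − x_k‖ ≤ v₁* − v_k hold for all k ≥ 0, where the scalar sequence {v_k} is non-decreasing and converges to v₁*. -/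
/-!
Composing with `B = F'(x₀)⁻¹` reduces everything to `G = B ∘ F`, whose derivative satisfies
`‖G'(x) - 1‖ ≤ ω₀ r` for `‖x - x₀‖ ≤ r`; Newton's iterates are the same for `F` and `G`.
Banach's lemma gives `‖G'(x)⁻¹‖ ≤ (1 - ω₀ r)⁻¹`, and the residual `G (x (k+1))` is a Taylor
remainder of size at most `2 ∫_{v k}^{v (k+1)} ω₀`. Since `ω₀` is monotone, `(1 - ω₀)⁻¹` times this
is at most `ψ (v (k+1)) - ψ (v k) = v (k+2) - v (k+1)`, so the increments of `x` are dominated by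
those of `v`. The orbit `v` of the monotone map `ψ` increases to its minimal fixed point `v₁*`;
hence `x` is Cauchy, and its limit is a zero because `‖G (x k)‖ ≤ 2 ‖x (k+1) - x k‖`.
-/

open Metric Filter Set MeasureTheory

section Calculus

variable {E F : Type*} [NormedAddCommGroup E] [NormedSpace ℝ E]
  [NormedAddCommGroup F] [NormedSpace ℝ F]

theorem norm_sub_sub_apply_le_integral {f : E → F} {f' : E → E →L[ℝ] F} {c h : E} {g : ℝ → ℝ}
    (hf : ∀ t ∈ Icc (0 : ℝ) 1, HasFDerivAt f (f' (c + t • h)) (c + t • h))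
    (hg : IntervalIntegrable g volume 0 1)
    (hbound : ∀ t ∈ Ioo (0 : ℝ) 1, ‖f' (c + t • h) h - f' c h‖ ≤ g t) :
    ‖f (c + h) - f c - f' c h‖ ≤ ∫ t in (0 : ℝ)..1, g t := by
  set φ : ℝ → F := fun t => f (c + t • h) - t • f' c h
  have hφ : ∀ t ∈ Icc (0 : ℝ) 1, HasDerivAt φ (f' (c + t • h) h - f' c h) t := by
    intro t ht
    have hpath : HasDerivAt (fun t : ℝ => c + t • h) h t := by
      simpa using ((hasDerivAt_id t).smul_const h).const_add c
    exact ((hf t ht).comp_hasDerivAt t hpath).sub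
      (by simpa using (hasDerivAt_id t).smul_const (f' c h))
  have hφ' : ∀ t ∈ Ioo (0 : ℝ) 1, HasDerivAt φ (f' (c + t • h) h - f' c h) t :=
    fun t ht => hφ t (Ioo_subset_Icc_self ht)
  have := norm_sub_le_integral_of_norm_deriv_le_of_le zero_le_one
    (fun t ht => (hφ t ht).continuousAt.continuousWithinAt)
    (fun t ht => (hφ' t ht).differentiableAt.differentiableWithinAt)
    (.of_forall fun t ht => (hφ' t ht).deriv ▸ hbound t ht) hg
  simpa [φ, sub_right_comm] using this

end Calculus

section Operators

variable {𝕜 X Y : Type*} [NontriviallyNormedField 𝕜] [NormedAddCommGroup X] [NormedSpace 𝕜 X]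
  [NormedAddCommGroup Y] [NormedSpace 𝕜 Y]

theorem isUnit_of_norm_sub_one_lt {R : Type*} [NormedRing R] [HasSummableGeomSeries R] {a : R}
    (h : ‖a - 1‖ < 1) : IsUnit a :=
  by_contra fun ha => nonunits.subset_compl_ball ha (mem_ball_iff_norm.2 h)

theorem apply_ringInverse_apply {T : X →L[𝕜] X} (hT : IsUnit T) (x : X) :
    T (Ring.inverse T x) = x := by
  simpa using DFunLike.congr_fun (Ring.mul_inverse_cancel T hT) x

theorem ringInverse_apply_apply {T : X →L[𝕜] X} (hT : IsUnit T) (x : X) :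
    Ring.inverse T (T x) = x := by
  simpa using DFunLike.congr_fun (Ring.inverse_mul_cancel T hT) x

theorem norm_le_of_norm_sub_one_le {T : X →L[𝕜] X} {q : ℝ} (hT : ‖T - 1‖ ≤ q) (hq : q < 1)
    (u : X) : ‖u‖ ≤ (1 - q)⁻¹ * ‖T u‖ := by
  have h : ‖u‖ ≤ ‖T u‖ + q * ‖u‖ :=
    calc ‖u‖ = ‖T u - (T - 1) u‖ := by simp
      _ ≤ ‖T u‖ + ‖(T - 1) u‖ := norm_sub_le _ _
      _ ≤ ‖T u‖ + q * ‖u‖ := by gcongr; exact (T - 1).le_of_opNorm_le hT u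
  rw [inv_mul_eq_div, le_div_iff₀ (sub_pos.2 hq)]
  linarith

theorem leftInverse_ringInverse_comp {B : Y →L[𝕜] X} {L₀ L : X →L[𝕜] Y}
    (hB : Function.LeftInverse L₀ B) (hT : IsUnit (B.comp L)) :
    Function.LeftInverse L ((Ring.inverse (B.comp L)).comp B) ∧
      Function.LeftInverse ((Ring.inverse (B.comp L)).comp B) L := by
  refine ⟨fun y => ?_, ringInverse_apply_apply hT⟩
  calc L (Ring.inverse (B.comp L) (B y))
      = L₀ (B.comp L (Ring.inverse (B.comp L) (B y))) := (hB _).symm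
    _ = y := by rw [apply_ringInverse_apply hT, hB]

end Operators

section Orbit

variable {α : Type*} {f : α → α} {u : ℕ → α} {a p : α}

theorem monotone_orbit_of_monotoneOn [Preorder α] (hf : MonotoneOn f (Icc a p)) (hp : f p = p)
    (hu : ∀ k, u (k + 1) = f (u k)) (ha : a ≤ u 0) (h01 : u 0 ≤ u 1) (h0p : u 0 ≤ p) :
    Monotone u ∧ ∀ k, u k ≤ p := by
  have key : ∀ k, a ≤ u k ∧ u k ≤ u (k + 1) ∧ u (k + 1) ≤ p := by
    intro k
    induction k with
    | zero => exact ⟨ha, h01, hu 0 ▸ hp ▸ hf ⟨ha, h0p⟩ ⟨ha.trans h0p, le_rfl⟩ h0p⟩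
    | succ k ih =>
      obtain ⟨hak, hkk, hkp⟩ := ih
      have hk : u k ∈ Icc a p := ⟨hak, hkk.trans hkp⟩
      have hk' : u (k + 1) ∈ Icc a p := ⟨hak.trans hkk, hkp⟩
      refine ⟨hak.trans hkk, ?_, ?_⟩
      · rw [hu k, hu (k + 1)]; exact hf hk hk' hkk
      · rw [hu (k + 1), ← hp]; exact hf hk' ⟨hk'.1.trans hkp, le_rfl⟩ hkp
  refine ⟨monotone_nat_of_le_succ fun k => (key k).2.1, fun k => ?_⟩
  cases k with
  | zero => exact h0p
  | succ k => exact (key k).2.2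

/-- A monotone orbit below `p` converges to a fixed point; minimality of `p` identifies it. -/
theorem tendsto_orbit_of_le_fixedPoint [ConditionallyCompleteLinearOrder α] [TopologicalSpace α]
    [OrderTopology α] (hf : ContinuousOn f (Icc a p)) (hu : ∀ k, u (k + 1) = f (u k))
    (hmono : Monotone u) (ha : a ≤ u 0) (hp : ∀ k, u k ≤ p)
    (hmin : ∀ w ∈ Icc a p, f w = w → p ≤ w) : Tendsto u atTop (nhds p) := by
  have hbdd : BddAbove (range u) := ⟨p, forall_mem_range.2 hp⟩
  have htend := tendsto_atTop_ciSup hmono hbdd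
  have hmem : (⨆ k, u k) ∈ Icc a p := ⟨ha.trans (le_ciSup hbdd 0), ciSup_le hp⟩
  have hfix : f (⨆ k, u k) = ⨆ k, u k := by
    refine tendsto_nhds_unique ?_ ((tendsto_add_atTop_iff_nat 1).2 htend)
    simp only [hu]
    exact (hf _ hmem).tendsto.comp
      (tendsto_nhdsWithin_iff.2 ⟨htend, .of_forall fun k => ⟨ha.trans (hmono k.zero_le), hp k⟩⟩)
  rwa [le_antisymm (hmin _ hmem hfix) hmem.2]

end Orbit

section Majorant

variable {η : ℝ} {ω₀ : ℝ → ℝ}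

/-- The function `ψ` of the majorizing sequence `v (k + 1) = ψ (v k)`. -/
noncomputable def majorant (η : ℝ) (ω₀ : ℝ → ℝ) (u : ℝ) : ℝ :=
  η + 2 * (1 - ω₀ u)⁻¹ * ∫ l in (0 : ℝ)..u, ω₀ l

theorem majorant_zero : majorant η ω₀ 0 = η := by
  simp [majorant]

theorem lt_one_of_lt_majorant {u : ℝ} (hu : 0 ≤ u) (hω : ∀ r ∈ Icc 0 u, 0 ≤ ω₀ r)
    (h : η < majorant η ω₀ u) : ω₀ u < 1 := by
  by_contra! hge
  have hI : 0 ≤ ∫ l in (0 : ℝ)..u, ω₀ l := intervalIntegral.integral_nonneg hu hω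
  have hinv : (1 - ω₀ u)⁻¹ ≤ 0 := inv_nonpos.2 (by linarith)
  unfold majorant at h
  nlinarith

theorem inv_one_sub_mul_integral_le_majorant_sub {s t : ℝ} (hs : 0 ≤ s) (hst : s ≤ t)
    (hmono : MonotoneOn ω₀ (Icc 0 t)) (hnn : ∀ r ∈ Icc 0 s, 0 ≤ ω₀ r) (ht : ω₀ t < 1) :
    (1 - ω₀ t)⁻¹ * (2 * ∫ l in s..t, ω₀ l) ≤ majorant η ω₀ t - majorant η ω₀ s := by
  have hint : ∀ a b, 0 ≤ a → a ≤ b → b ≤ t → IntervalIntegrable ω₀ volume a b :=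
    fun a b ha hab hb => (hmono.mono (by
      rw [uIcc_of_le hab]; exact Icc_subset_Icc ha hb)).intervalIntegrable
  have hsplit := intervalIntegral.integral_add_adjacent_intervals
    (hint 0 s le_rfl hs hst) (hint s t hs hst le_rfl)
  have hIs : 0 ≤ ∫ l in (0 : ℝ)..s, ω₀ l := intervalIntegral.integral_nonneg hs hnn
  have hωst : ω₀ s ≤ ω₀ t := hmono ⟨hs, hst⟩ ⟨hs.trans hst, le_rfl⟩ hst
  have hinv : (1 - ω₀ s)⁻¹ ≤ (1 - ω₀ t)⁻¹ := inv_anti₀ (by linarith) (by linarith)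
  unfold majorant
  rw [← hsplit]
  nlinarith [mul_le_mul_of_nonneg_right hinv hIs]

theorem majorant_orbit_spec {vstar : ℝ} {v : ℕ → ℝ} (hη : 0 < η)
    (hωmono : MonotoneOn ω₀ (Icc 0 vstar)) (hωnn : ∀ r ∈ Icc 0 vstar, 0 ≤ ω₀ r) (hcont : ContinuousOn (majorant η ω₀) (Icc 0 vstar))
    (hmono : MonotoneOn (majorant η ω₀) (Icc 0 vstar)) (hfix : majorant η ω₀ vstar = vstar)
    (hvstar : η < vstar) (hmin : ∀ w ∈ Icc 0 vstar, majorant η ω₀ w = w → vstar ≤ w)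
    (hv0 : v 0 = 0) (hvrec : ∀ k, v (k + 1) = majorant η ω₀ (v k)) :
    Monotone v ∧ (∀ k, v k ≤ vstar) ∧ Tendsto v atTop (nhds vstar) ∧ ω₀ vstar < 1 ∧
      ∀ k, (1 - ω₀ (v (k + 1)))⁻¹ * (2 * ∫ s in v k..v (k + 1), ω₀ s) ≤ v (k + 2) - v (k + 1) := by
  have hvstar₀ : 0 ≤ vstar := hη.le.trans hvstar.le
  have hv1 : v 1 = η := by rw [hvrec, hv0, majorant_zero]
  obtain ⟨hvmono, hvle⟩ := monotone_orbit_of_monotoneOn hmono hfix hvrec hv0.ge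
    (by rw [hv0, hv1]; exact hη.le) (hv0 ▸ hvstar₀)
  have hv_nonneg : ∀ k, 0 ≤ v k := fun k => hv0 ▸ hvmono k.zero_le
  have hωstar : ω₀ vstar < 1 := lt_one_of_lt_majorant hvstar₀ hωnn (hfix ▸ hvstar)
  refine ⟨hvmono, hvle, tendsto_orbit_of_le_fixedPoint hcont hvrec hvmono hv0.ge hvle hmin,
    hωstar, fun k => ?_⟩
  calc (1 - ω₀ (v (k + 1)))⁻¹ * (2 * ∫ s in v k..v (k + 1), ω₀ s)
      ≤ majorant η ω₀ (v (k + 1)) - majorant η ω₀ (v k) :=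
        inv_one_sub_mul_integral_le_majorant_sub (hv_nonneg k) (hvmono k.le_succ)
          (hωmono.mono (Icc_subset_Icc_right (hvle _)))
          (fun r hr => hωnn r ⟨hr.1, hr.2.trans (hvle k)⟩)
          ((hωmono ⟨hv_nonneg _, hvle _⟩ ⟨hvstar₀, le_rfl⟩ (hvle _)).trans_lt hωstar)
    _ = v (k + 2) - v (k + 1) := by rw [← hvrec, ← hvrec]

end Majorant

section Sequences

variable {E : Type*} [NormedAddCommGroup E] [CompleteSpace E]

theorem exists_tendsto_of_norm_sub_le_sub {x : ℕ → E} {v : ℕ → ℝ} {L : ℝ}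
    (hv : Tendsto v atTop (nhds L)) (hx : ∀ k, ‖x (k + 1) - x k‖ ≤ v (k + 1) - v k) :
    ∃ xstar, Tendsto x atTop (nhds xstar) ∧ ∀ k, ‖xstar - x k‖ ≤ L - v k := by
  have hle : ∀ n m, n ≤ m → ‖x m - x n‖ ≤ v m - v n := by
    intro n m hnm
    induction m, hnm using Nat.le_induction with
    | base => simp
    | succ m _ ih =>
      linarith [norm_sub_le_norm_sub_add_norm_sub (x (m + 1)) (x m) (x n), hx m]
  have hdist : ∀ m n, dist (x m) (x n) ≤ dist (v m) (v n) := by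
    intro m n
    rw [dist_eq_norm, Real.dist_eq]
    rcases le_total n m with h | h
    · exact (hle n m h).trans (le_abs_self _)
    · rw [norm_sub_rev, abs_sub_comm]; exact (hle m n h).trans (le_abs_self _)
  have hcauchy : CauchySeq x := Metric.cauchySeq_iff.2 fun ε hε =>
    (Metric.cauchySeq_iff.1 hv.cauchySeq ε hε).imp fun N hN m hm n hn =>
      (hdist m n).trans_lt (hN m hm n hn)
  obtain ⟨xstar, hlim⟩ := cauchySeq_tendsto_of_complete hcauchy
  refine ⟨xstar, hlim, fun k => le_of_tendsto_of_tendsto ((hlim.sub_const (x k)).norm)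
    (hv.sub_const (v k)) (eventually_atTop.2 ⟨k, fun m hm => hle k m hm⟩)⟩

end Sequences

section Newton

variable {X : Type*} [NormedAddCommGroup X] [NormedSpace ℝ X]

/-- `Ring.inverse` is `0` at non-invertible operators; every estimate below is made at points where
`G' z` is a unit. -/
noncomputable def newtonStep (G : X → X) (G' : X → X →L[ℝ] X) (z : X) : X :=
  z - Ring.inverse (G' z) (G z)

variable {G : X → X} {G' : X → X →L[ℝ] X}

theorem apply_newtonStep_sub {z : X} (hz : IsUnit (G' z)) :
    G' z (newtonStep G G' z - z) = -G z := by
  simp [newtonStep, apply_ringInverse_apply hz]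

theorem norm_newtonStep_sub_le [CompleteSpace X] {z : X} {q : ℝ} (hq : ‖G' z - 1‖ ≤ q)
    (hq1 : q < 1) : ‖newtonStep G G' z - z‖ ≤ (1 - q)⁻¹ * ‖G z‖ := by
  simpa [apply_newtonStep_sub (isUnit_of_norm_sub_one_lt (hq.trans_lt hq1))] using
    norm_le_of_norm_sub_one_le hq hq1 (newtonStep G G' z - z)

/-- `G (newtonStep G G' z)` is the Taylor remainder of `G` at `z`; at `y = z + t • h` on the
segment, both `y` and `z` lie within `s = r + t (r' - r)` of `x₀`, so `‖G' y - G' z‖ ≤ 2 ω₀ s`. -/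
theorem norm_apply_newtonStep_le {x₀ z : X} {ω₀ : ℝ → ℝ} {r r' : ℝ} (hz : ‖z - x₀‖ ≤ r)
    (hstep : ‖newtonStep G G' z - z‖ ≤ r' - r) (hunit : IsUnit (G' z))
    (hG : ∀ y, ‖y - x₀‖ ≤ r' → HasFDerivAt G (G' y) y)
    (hG' : ∀ y s, ‖y - x₀‖ ≤ s → s ≤ r' → ‖G' y - 1‖ ≤ ω₀ s)
    (hω : MonotoneOn ω₀ (Icc r r')) :
    ‖G (newtonStep G G' z)‖ ≤ 2 * ∫ s in r..r', ω₀ s := by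
  set h := newtonStep G G' z - z
  set δ := r' - r
  have hδ : 0 ≤ δ := (norm_nonneg _).trans hstep
  have hseg : ∀ t ∈ Icc (0 : ℝ) 1, ‖z + t • h - x₀‖ ≤ δ * t + r ∧ δ * t + r ≤ r' := by
    intro t ⟨ht0, ht1⟩
    refine ⟨?_, by nlinarith⟩
    calc ‖z + t • h - x₀‖ = ‖(z - x₀) + t • h‖ := by abel_nf
      _ ≤ ‖z - x₀‖ + ‖t • h‖ := norm_add_le _ _
      _ ≤ δ * t + r := by rw [norm_smul, Real.norm_of_nonneg ht0]; nlinarith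
  have hbound : ∀ t ∈ Ioo (0 : ℝ) 1, ‖G' (z + t • h) h - G' z h‖ ≤ 2 * δ * ω₀ (δ * t + r) := by
    intro t ht
    obtain ⟨hy, hs⟩ := hseg t (Ioo_subset_Icc_self ht)
    have hz' : ‖z - x₀‖ ≤ δ * t + r := hz.trans (by nlinarith [ht.1])
    have hω_nonneg : 0 ≤ ω₀ (δ * t + r) := (norm_nonneg _).trans (hG' _ _ hz' hs)
    calc ‖G' (z + t • h) h - G' z h‖ = ‖((G' (z + t • h) - 1) - (G' z - 1)) h‖ := by simp
      _ ≤ ‖(G' (z + t • h) - 1) - (G' z - 1)‖ * ‖h‖ := ContinuousLinearMap.le_opNorm _ _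
      _ ≤ (ω₀ (δ * t + r) + ω₀ (δ * t + r)) * δ :=
        mul_le_mul ((norm_sub_le _ _).trans (add_le_add (hG' _ _ hy hs) (hG' _ _ hz' hs))) hstep
          (norm_nonneg _) (by linarith)
      _ = 2 * δ * ω₀ (δ * t + r) := by ring
  have hmono : MonotoneOn (fun t => ω₀ (δ * t + r)) (uIcc 0 1) := by
    rw [uIcc_of_le zero_le_one]
    intro a ha b hb hab
    exact hω ⟨by nlinarith [ha.1], (hseg a ha).2⟩ ⟨by nlinarith [hb.1], (hseg b hb).2⟩
      (by nlinarith)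
  have htaylor := norm_sub_sub_apply_le_integral
    (fun t ht => hG _ ((hseg t ht).1.trans (hseg t ht).2)) (hmono.intervalIntegrable.const_mul (2 * δ)) hbound
  have hres : G (z + h) - G z - G' z h = G (newtonStep G G' z) := by
    rw [apply_newtonStep_sub hunit, add_sub_cancel]; abel
  have hint : ∫ t in (0 : ℝ)..1, 2 * δ * ω₀ (δ * t + r) = 2 * ∫ s in r..r', ω₀ s := by
    rw [intervalIntegral.integral_const_mul, mul_assoc, ← smul_eq_mul δ,
      intervalIntegral.smul_integral_comp_mul_add]
    simp [δ]
  rwa [hres, hint] at htaylor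

/-- Along Newton iterates `G (x k) = -G'(x k) (x (k+1) - x k)`, so bounded derivatives force the
limit to be a zero. -/
theorem apply_eq_zero_of_tendsto_newtonStep_iterate {x₀ xstar : X} {C : ℝ}
    (hlim : Tendsto (fun k => (newtonStep G G')^[k] x₀) atTop (nhds xstar))
    (hcont : ContinuousAt G xstar) (hunit : ∀ k, IsUnit (G' ((newtonStep G G')^[k] x₀)))
    (hbdd : ∀ k, ‖G' ((newtonStep G G')^[k] x₀)‖ ≤ C) : G xstar = 0 := by
  set x := fun k => (newtonStep G G')^[k] x₀
  have hsucc : Tendsto (fun k => x (k + 1) - x k) atTop (nhds 0) := by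
    simpa using ((tendsto_add_atTop_iff_nat 1).2 hlim).sub hlim
  have hGx : ∀ k, ‖G (x k)‖ ≤ C * ‖x (k + 1) - x k‖ := by
    intro k
    rw [← norm_neg, ← apply_newtonStep_sub (hunit k),
      ← Function.iterate_succ_apply' (newtonStep G G') k x₀]
    exact (G' (x k)).le_of_opNorm_le (hbdd k) _
  have hzero : Tendsto (fun k => G (x k)) atTop (nhds 0) :=
    squeeze_zero_norm hGx (by simpa using hsucc.norm.const_mul C)
  exact tendsto_nhds_unique (hcont.tendsto.comp hlim) hzero

theorem newtonStep_iterate_majorized [CompleteSpace X] {x₀ : X} {ω₀ : ℝ → ℝ} {η p : ℝ} {v : ℕ → ℝ}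
    (hG : ∀ y, ‖y - x₀‖ ≤ p → HasFDerivAt G (G' y) y)
    (hG' : ∀ y s, ‖y - x₀‖ ≤ s → s ≤ p → ‖G' y - 1‖ ≤ ω₀ s)
    (hGx₀ : ‖G x₀‖ ≤ η) (hωmono : MonotoneOn ω₀ (Icc 0 p)) (hω0 : ω₀ 0 = 0) (hωp : ω₀ p < 1)
    (hv : Monotone v) (hvp : ∀ k, v k ≤ p) (hv0 : v 0 = 0) (hv1 : v 1 = η)
    (hvstep : ∀ k,
      (1 - ω₀ (v (k + 1)))⁻¹ * (2 * ∫ s in v k..v (k + 1), ω₀ s) ≤ v (k + 2) - v (k + 1))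
    (k : ℕ) :
    ‖(newtonStep G G')^[k] x₀ - x₀‖ ≤ v k ∧
      ‖(newtonStep G G')^[k + 1] x₀ - (newtonStep G G')^[k] x₀‖ ≤ v (k + 1) - v k := by
  set x := fun k => (newtonStep G G')^[k] x₀
  have hxs : ∀ k, x (k + 1) = newtonStep G G' (x k) := fun k =>
    Function.iterate_succ_apply' _ k x₀
  have hv_nonneg : ∀ k, 0 ≤ v k := fun k => hv0 ▸ hv k.zero_le
  have hωv : ∀ k, ω₀ (v k) < 1 := fun k =>
    (hωmono ⟨hv_nonneg k, hvp k⟩ ⟨(hv_nonneg k).trans (hvp k), le_rfl⟩ (hvp k)).trans_lt hωp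
  have hnear : ∀ k, ‖x k - x₀‖ ≤ v k → ‖G' (x k) - 1‖ ≤ ω₀ (v k) := fun k h =>
    hG' _ _ h (hvp k)
  have hstep : ∀ k, ‖x k - x₀‖ ≤ v k → ‖x (k + 1) - x k‖ ≤ (1 - ω₀ (v k))⁻¹ * ‖G (x k)‖ :=
    fun k h => hxs k ▸ norm_newtonStep_sub_le (hnear k h) (hωv k)
  show ‖x k - x₀‖ ≤ v k ∧ ‖x (k + 1) - x k‖ ≤ v (k + 1) - v k
  induction k with
  | zero =>
    have h0 : ‖x 0 - x₀‖ ≤ v 0 := by simp [x, hv0]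
    refine ⟨h0, ?_⟩
    calc ‖x 1 - x 0‖ ≤ (1 - ω₀ (v 0))⁻¹ * ‖G (x 0)‖ := hstep 0 h0
      _ ≤ v 1 - v 0 := by simpa [x, hv0, hω0, hv1] using hGx₀
  | succ k ih =>
    obtain ⟨hk, hk1⟩ := ih
    have hxk1 : ‖x (k + 1) - x₀‖ ≤ v (k + 1) := by
      linarith [norm_sub_le_norm_sub_add_norm_sub (x (k + 1)) (x k) x₀]
    have hres : ‖G (x (k + 1))‖ ≤ 2 * ∫ s in v k..v (k + 1), ω₀ s := by
      rw [hxs k] at hk1 ⊢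
      exact norm_apply_newtonStep_le hk hk1
        (isUnit_of_norm_sub_one_lt ((hnear k hk).trans_lt (hωv k)))
        (fun y hy => hG y (hy.trans (hvp _))) (fun y s hy hs => hG' y s hy (hs.trans (hvp _)))
        (hωmono.mono (Icc_subset_Icc (hv_nonneg k) (hvp _)))
    refine ⟨hxk1, ?_⟩
    have hpos : 0 < 1 - ω₀ (v (k + 1)) := sub_pos.2 (hωv _)
    calc ‖x (k + 2) - x (k + 1)‖ ≤ (1 - ω₀ (v (k + 1)))⁻¹ * ‖G (x (k + 1))‖ := hstep _ hxk1
      _ ≤ (1 - ω₀ (v (k + 1)))⁻¹ * (2 * ∫ s in v k..v (k + 1), ω₀ s) := by gcongr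
      _ ≤ v (k + 2) - v (k + 1) := hvstep k

theorem newton_majorant_convergence [CompleteSpace X] {x₀ : X} {ω₀ : ℝ → ℝ} {η p : ℝ} {v : ℕ → ℝ}
    (hG : ∀ y, ‖y - x₀‖ ≤ p → HasFDerivAt G (G' y) y)
    (hG' : ∀ y s, ‖y - x₀‖ ≤ s → s ≤ p → ‖G' y - 1‖ ≤ ω₀ s)
    (hGx₀ : ‖G x₀‖ ≤ η) (hωmono : MonotoneOn ω₀ (Icc 0 p)) (hω0 : ω₀ 0 = 0) (hωp : ω₀ p < 1)
    (hv : Monotone v) (hvp : ∀ k, v k ≤ p) (hv0 : v 0 = 0) (hv1 : v 1 = η)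
    (hvtend : Tendsto v atTop (nhds p))
    (hvstep : ∀ k,
      (1 - ω₀ (v (k + 1)))⁻¹ * (2 * ∫ s in v k..v (k + 1), ω₀ s) ≤ v (k + 2) - v (k + 1)) :
    (∀ k, IsUnit (G' ((newtonStep G G')^[k] x₀)) ∧ ‖(newtonStep G G')^[k] x₀ - x₀‖ ≤ v k ∧
      ‖(newtonStep G G')^[k + 1] x₀ - (newtonStep G G')^[k] x₀‖ ≤ v (k + 1) - v k) ∧
    ∃ xstar, Tendsto (fun k => (newtonStep G G')^[k] x₀) atTop (nhds xstar) ∧ G xstar = 0 ∧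
      ∀ k, ‖xstar - (newtonStep G G')^[k] x₀‖ ≤ p - v k := by
  have hmaj := newtonStep_iterate_majorized hG hG' hGx₀ hωmono hω0 hωp hv hvp hv0 hv1 hvstep
  have hp : 0 ≤ p := hv0 ▸ hvp 0
  have hnear : ∀ k, ‖G' ((newtonStep G G')^[k] x₀) - 1‖ < 1 := fun k =>
    (hG' _ _ (hmaj k).1 (hvp k)).trans_lt
      ((hωmono ⟨hv0 ▸ hv k.zero_le, hvp k⟩ ⟨hp, le_rfl⟩ (hvp k)).trans_lt hωp)
  have hunit : ∀ k, IsUnit (G' ((newtonStep G G')^[k] x₀)) := fun k =>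
    isUnit_of_norm_sub_one_lt (hnear k)
  have hbdd : ∀ k, ‖G' ((newtonStep G G')^[k] x₀)‖ ≤ 1 + 1 := fun k =>
    (norm_le_norm_add_norm_sub' _ 1).trans
      (add_le_add ContinuousLinearMap.norm_id_le (hnear k).le)
  obtain ⟨xstar, hlim, hest⟩ := exists_tendsto_of_norm_sub_le_sub
    (x := fun k => (newtonStep G G')^[k] x₀) hvtend fun k => (hmaj k).2
  have hxstar : ‖xstar - x₀‖ ≤ p := by simpa [hv0] using hest 0
  exact ⟨fun k => ⟨hunit k, hmaj k⟩, xstar, hlim,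
    apply_eq_zero_of_tendsto_newtonStep_iterate hlim (hG _ hxstar).continuousAt hunit hbdd, hest⟩

end Newton

theorem newton_convergence_relaxed_continuity_general
    {X Y : Type*} [NormedAddCommGroup X] [NormedSpace ℝ X] [CompleteSpace X]
    [NormedAddCommGroup Y] [NormedSpace ℝ Y]
    (DF : Set X)
    (F : X → Y) (F' : X → X →L[ℝ] Y)
    (hFderiv : ∀ x ∈ DF, HasFDerivAt F (F' x) x)
    (x₀ : X)
    (B : Y →L[ℝ] X)
    (hB₁ : ∀ y, (F' x₀) (B y) = y) (hB₂ : ∀ z, B ((F' x₀) z) = z)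
    (η R : ℝ) (hη : 0 < η)
    (hball : closedBall x₀ R ⊆ DF)
    (ω₀ : ℝ → ℝ)
    (hωmono : MonotoneOn ω₀ (Set.Icc 0 R))
    (hωnn : ∀ r ∈ Set.Icc (0:ℝ) R, 0 ≤ ω₀ r)
    (hω0 : ω₀ 0 = 0)
    (hbound : ∀ x : X, ∀ r : ℝ, ‖x - x₀‖ ≤ r → r ≤ R →
        ‖B.comp (F' x - F' x₀)‖ ≤ ω₀ r)
    (hη0 : ‖B (F x₀)‖ ≤ η)
    (ψ : ℝ → ℝ)
    (hψdef : ∀ u, ψ u = η + 2 * (1 - ω₀ u)⁻¹ * ∫ l in (0:ℝ)..u, ω₀ l)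
    (hψcont : ContinuousOn ψ (Set.Icc 0 R))
    (hψmono : MonotoneOn ψ (Set.Icc 0 R))
    (vstar : ℝ) (hfix : ψ vstar = vstar)
    (hvstar₁ : η < vstar) (hvstar₂ : vstar ≤ R)
    (hmin : ∀ w ∈ Set.Icc (0:ℝ) R, ψ w = w → vstar ≤ w)
    (v : ℕ → ℝ) (hv0 : v 0 = 0) (hvrec : ∀ k, v (k + 1) = ψ (v k)) :
    ∃ x : ℕ → X, x 0 = x₀ ∧
      (∀ k, ∃ A : Y →L[ℝ] X, (∀ y, (F' (x k)) (A y) = y) ∧ (∀ z, A ((F' (x k)) z) = z) ∧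
        x (k + 1) = x k - A (F (x k))) ∧
      (∀ k, x k ∈ closedBall x₀ vstar) ∧
      (∀ k, ‖x (k + 1) - x k‖ ≤ v (k + 1) - v k) ∧
      Monotone v ∧ Tendsto v atTop (nhds vstar) ∧
      ∃ xstar : X, Tendsto x atTop (nhds xstar) ∧ F xstar = 0 ∧
        ∀ k, ‖xstar - x k‖ ≤ vstar - v k := by
  obtain rfl : ψ = majorant η ω₀ := funext hψdef
  have hsub : Icc 0 vstar ⊆ Icc 0 R := Icc_subset_Icc_right hvstar₂
  obtain ⟨hvmono, hvle, hvtend, hωstar, hvstep⟩ := majorant_orbit_spec hη (hωmono.mono hsub)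
    (fun r hr => hωnn r (hsub hr)) (hψcont.mono hsub) (hψmono.mono hsub) hfix hvstar₁
    (fun w hw => hmin w (hsub hw)) hv0 hvrec
  have hG' : ∀ y s, ‖y - x₀‖ ≤ s → s ≤ vstar → ‖B.comp (F' y) - 1‖ ≤ ω₀ s := by
    intro y s hy hs
    have hnormal : B.comp (F' y) - 1 = B.comp (F' y - F' x₀) := by ext; simp [hB₂]
    exact hnormal ▸ hbound y s hy (hs.trans hvstar₂)
  obtain ⟨hiter, xstar, hlim, hzero, hest⟩ := newton_majorant_convergence
    (G := fun x => B (F x)) (G' := fun x => B.comp (F' x))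
    (fun y hy => B.hasFDerivAt.comp y
      (hFderiv y (hball (mem_closedBall_iff_norm.2 (hy.trans hvstar₂)))))
    hG' hη0 (hωmono.mono hsub) hω0 hωstar hvmono hvle hv0 (by rw [hvrec, hv0, majorant_zero])
    hvtend hvstep
  refine ⟨_, rfl, fun k => ?_, fun k => mem_closedBall_iff_norm.2 ((hiter k).2.1.trans (hvle k)),
    fun k => (hiter k).2.2, hvmono, hvtend, xstar, hlim, ?_, hest⟩
  · obtain ⟨hright, hleft⟩ := leftInverse_ringInverse_comp hB₁ (hiter k).1
    exact ⟨_, hright, hleft, Function.iterate_succ_apply' _ _ _⟩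
  · simpa [hzero] using (hB₁ (F xstar)).symm

/-- Under the set Υ of conditions, the Newton sequence is well defined (each `F'(x_k)`
is invertible), stays in the closed ball `B̄(x₀, v₁*)`, converges to a solution `x*` of
`F(x) = 0`, and the majorization estimates hold, with the majorizing scalar sequence
`{v_k}` non-decreasing and converging to the minimal fixed point `v₁*` of `ψ`. -/
theorem newton_convergence_relaxed_continuity
    {X Y : Type*} [NormedAddCommGroup X] [NormedSpace ℝ X] [CompleteSpace X]
    [NormedAddCommGroup Y] [NormedSpace ℝ Y] [CompleteSpace Y]
    (DF : Set X) (hDF : IsOpen DF)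
    (F : X → Y) (F' : X → X →L[ℝ] Y)
    (hFderiv : ∀ x ∈ DF, HasFDerivAt F (F' x) x)
    (hFcont : ContinuousOn F' DF)
    (x₀ : X) (hx₀ : x₀ ∈ DF)
    (B : Y →L[ℝ] X)
    (hB₁ : ∀ y, (F' x₀) (B y) = y) (hB₂ : ∀ z, B ((F' x₀) z) = z)
    (η R : ℝ) (hη : 0 < η) (hR : 0 < R)
    (hball : closedBall x₀ R ⊆ DF)
    (ω₀ : ℝ → ℝ)
    (hωcont : ContinuousOn ω₀ (Set.Icc 0 R))
    (hωmono : MonotoneOn ω₀ (Set.Icc 0 R))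
    (hωnn : ∀ r ∈ Set.Icc (0:ℝ) R, 0 ≤ ω₀ r)
    (hω0 : ω₀ 0 = 0)
    (hbound : ∀ x : X, ∀ r : ℝ, ‖x - x₀‖ ≤ r → r ≤ R →
        ‖B.comp (F' x - F' x₀)‖ ≤ ω₀ r)
    (hη0 : ‖B (F x₀)‖ ≤ η)
    (ψ : ℝ → ℝ)
    (hψdef : ∀ u, ψ u = η + 2 * (1 - ω₀ u)⁻¹ * ∫ l in (0:ℝ)..u, ω₀ l)
    (hψcont : ContinuousOn ψ (Set.Icc 0 R))
    (hψmono : MonotoneOn ψ (Set.Icc 0 R))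
    (vstar : ℝ) (hfix : ψ vstar = vstar)
    (hvstar₁ : η < vstar) (hvstar₂ : vstar ≤ R)
    (hmin : ∀ w ∈ Set.Icc (0:ℝ) R, ψ w = w → vstar ≤ w)
    (v : ℕ → ℝ) (hv0 : v 0 = 0) (hvrec : ∀ k, v (k + 1) = ψ (v k)) :
    ∃ x : ℕ → X, x 0 = x₀ ∧
      (∀ k, ∃ A : Y →L[ℝ] X, (∀ y, (F' (x k)) (A y) = y) ∧ (∀ z, A ((F' (x k)) z) = z) ∧
        x (k + 1) = x k - A (F (x k))) ∧
      (∀ k, x k ∈ closedBall x₀ vstar) ∧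
      (∀ k, ‖x (k + 1) - x k‖ ≤ v (k + 1) - v k) ∧
      Monotone v ∧ Tendsto v atTop (nhds vstar) ∧
      ∃ xstar : X, Tendsto x atTop (nhds xstar) ∧ F xstar = 0 ∧
        ∀ k, ‖xstar - x k‖ ≤ vstar - v k :=
  newton_convergence_relaxed_continuity_general DF F F' hFderiv x₀ B hB₁ hB₂ η R hη hball ω₀ hωmono
    hωnn hω0 hbound hη0 ψ hψdef hψcont hψmono vstar hfix hvstar₁ hvstar₂ hmin v hv0 hvrec
end

section
/- Under the set Υ of conditions, the solution x* of F(x) = 0 obtained as the limit of the Newton sequence is the unique solution of F(x) = 0 in the open ball B(x₀, v₁*). -/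
open Metric Filter MeasureTheory intervalIntegral

set_option maxHeartbeats 2000000 in
/-- Under the set Υ of conditions, the solution `x*` of `F(x) = 0` obtained as the limit of
the Newton sequence is the unique solution of `F(x) = 0` in the open ball `B(x₀, v₁*)`. -/
theorem newton_solution_unique_in_ball
    {X Y : Type*} [NormedAddCommGroup X] [NormedSpace ℝ X] [CompleteSpace X]
    [NormedAddCommGroup Y] [NormedSpace ℝ Y] [CompleteSpace Y]
    (DF : Set X) (hDF : IsOpen DF)
    (F : X → Y) (F' : X → X →L[ℝ] Y)
    (hFderiv : ∀ x ∈ DF, HasFDerivAt F (F' x) x)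
    (hFcont : ContinuousOn F' DF)
    (x₀ : X) (hx₀ : x₀ ∈ DF)
    (B : Y →L[ℝ] X)
    (hB₁ : ∀ y, (F' x₀) (B y) = y) (hB₂ : ∀ z, B ((F' x₀) z) = z)
    (η R : ℝ) (hη : 0 < η) (hR : 0 < R)
    (hball : closedBall x₀ R ⊆ DF)
    (ω₀ : ℝ → ℝ)
    (hωcont : ContinuousOn ω₀ (Set.Icc 0 R))
    (hωmono : MonotoneOn ω₀ (Set.Icc 0 R))
    (hωnn : ∀ r ∈ Set.Icc (0:ℝ) R, 0 ≤ ω₀ r)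
    (hω0 : ω₀ 0 = 0)
    (hbound : ∀ x : X, ∀ r : ℝ, ‖x - x₀‖ ≤ r → r ≤ R →
        ‖B.comp (F' x - F' x₀)‖ ≤ ω₀ r)
    (hη0 : ‖B (F x₀)‖ ≤ η)
    (ψ : ℝ → ℝ)
    (hψdef : ∀ u, ψ u = η + 2 * (1 - ω₀ u)⁻¹ * ∫ l in (0:ℝ)..u, ω₀ l)
    (hψcont : ContinuousOn ψ (Set.Icc 0 R))
    (hψmono : MonotoneOn ψ (Set.Icc 0 R))
    (vstar : ℝ) (hfix : ψ vstar = vstar)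
    (hvstar₁ : η < vstar) (hvstar₂ : vstar ≤ R)
    (hmin : ∀ w ∈ Set.Icc (0:ℝ) R, ψ w = w → vstar ≤ w)
    -- the Newton sequence with starting point x₀ and its limit x*
    (x : ℕ → X) (hx0 : x 0 = x₀)
    (hxrec : ∀ k, ∃ A : Y →L[ℝ] X, (∀ y, (F' (x k)) (A y) = y) ∧
        (∀ z, A ((F' (x k)) z) = z) ∧ x (k + 1) = x k - A (F (x k)))
    (xstar : X) (hlim : Tendsto x atTop (nhds xstar)) (hsol : F xstar = 0) :
    ∀ z ∈ ball x₀ vstar, F z = 0 → z = xstar := by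
  have hv0 : (0:ℝ) < vstar := hη.trans hvstar₁
  -- nonnegativity of integrals of ω₀
  have hintnn : ∀ a b : ℝ, 0 ≤ a → a ≤ b → b ≤ R → 0 ≤ ∫ l in a..b, ω₀ l := by
    intro a b ha hab hbR
    exact intervalIntegral.integral_nonneg hab (fun u hu => hωnn u ⟨ha.trans hu.1, hu.2.trans hbR⟩)
  have hωInt : ∀ a b : ℝ, 0 ≤ a → a ≤ b → b ≤ R →
      IntervalIntegrable ω₀ volume a b := by
    intro a b ha hab hbR
    apply ContinuousOn.intervalIntegrable
    apply hωcont.mono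
    rw [Set.uIcc_of_le hab]
    exact Set.Icc_subset_Icc ha hbR
  -- ω₀ vstar < 1
  have hωv : ω₀ vstar < 1 := by
    by_contra h
    push_neg at h
    have h1 : (1 - ω₀ vstar)⁻¹ ≤ 0 := inv_nonpos.mpr (by linarith)
    have h2 : 0 ≤ ∫ l in (0:ℝ)..vstar, ω₀ l := hintnn 0 vstar le_rfl hv0.le hvstar₂
    have h3 := hψdef vstar
    nlinarith [hfix]
  have hψ0 : ψ 0 = η := by rw [hψdef]; simp
  -- the majorizing sequence
  set t : ℕ → ℝ := fun n => ψ^[n] 0 with htdef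
  have ht0 : t 0 = 0 := rfl
  have htsucc : ∀ n, t (n+1) = ψ (t n) := fun n => Function.iterate_succ_apply' ψ n 0
  have htkey : ∀ k, 0 ≤ t k ∧ t k ≤ vstar ∧ t k ≤ t (k+1) := by
    intro k; induction k with
    | zero =>
      refine ⟨le_rfl, hv0.le, ?_⟩
      rw [htsucc, ht0, hψ0]; exact hη.le
    | succ k ih =>
      obtain ⟨h0, hv, hs⟩ := ih
      have hmem : t k ∈ Set.Icc (0:ℝ) R := ⟨h0, hv.trans hvstar₂⟩
      have h0' : 0 ≤ t (k+1) := h0.trans hs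
      have hv' : t (k+1) ≤ vstar := by
        rw [htsucc]
        calc ψ (t k) ≤ ψ vstar := hψmono hmem ⟨hv0.le, hvstar₂⟩ hv
          _ = vstar := hfix
      refine ⟨h0', hv', ?_⟩
      calc t (k+1) = ψ (t k) := htsucc k
        _ ≤ ψ (t (k+1)) := hψmono hmem ⟨h0', hv'.trans hvstar₂⟩ hs
        _ = t (k+1+1) := (htsucc (k+1)).symm
  have htnn : ∀ k, 0 ≤ t k := fun k => (htkey k).1
  have htv : ∀ k, t k ≤ vstar := fun k => (htkey k).2.1
  have htmono : ∀ k, t k ≤ t (k+1) := fun k => (htkey k).2.2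
  have hωle : ∀ r, 0 ≤ r → r ≤ vstar → ω₀ r ≤ ω₀ vstar := fun r h0 h1 =>
    hωmono ⟨h0, h1.trans hvstar₂⟩ ⟨hv0.le, hvstar₂⟩ h1
  have hωpos : ∀ r, 0 ≤ r → r ≤ vstar → 0 < 1 - ω₀ r := by
    intro r h0 h1; have := hωle r h0 h1; linarith
  -- inverse bound
  have hAbound : ∀ (u : X) (A : Y →L[ℝ] X), (∀ y, (F' u) (A y) = y) →
      ∀ r, ‖u - x₀‖ ≤ r → r ≤ vstar → ∀ y : Y,
      (1 - ω₀ r) * ‖A y‖ ≤ ‖B y‖ := by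
    intro u A hA r hur hrv y
    have hb := hbound u r hur (hrv.trans hvstar₂)
    have e1 : (B.comp (F' u - F' x₀)) (A y) = B y - A y := by
      simp [ContinuousLinearMap.comp_apply, ContinuousLinearMap.sub_apply, map_sub, hA y, hB₂]
    have key : A y = B y - (B.comp (F' u - F' x₀)) (A y) := by rw [e1]; abel
    have h1 : ‖(B.comp (F' u - F' x₀)) (A y)‖ ≤ ω₀ r * ‖A y‖ :=
      le_trans ((B.comp (F' u - F' x₀)).le_opNorm (A y))
        (mul_le_mul_of_nonneg_right hb (norm_nonneg _))
    have h2 : ‖A y‖ ≤ ‖B y‖ + ω₀ r * ‖A y‖ := by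
      calc ‖A y‖ = ‖B y - (B.comp (F' u - F' x₀)) (A y)‖ := by rw [← key]
        _ ≤ ‖B y‖ + ‖(B.comp (F' u - F' x₀)) (A y)‖ := norm_sub_le _ _
        _ ≤ ‖B y‖ + ω₀ r * ‖A y‖ := by linarith
    nlinarith [norm_nonneg (A y)]
  -- fundamental theorem of calculus along segments
  have hFTC : ∀ p d : X, (∀ s ∈ Set.Icc (0:ℝ) 1, ‖p + s • d - x₀‖ ≤ R) →
      IntervalIntegrable (fun s : ℝ => B ((F' (p + s • d)) d)) volume 0 1 ∧
      B (F (p + d)) - B (F p) = ∫ s in (0:ℝ)..1, B ((F' (p + s • d)) d) := by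
    intro p d hsegR
    have hmem : ∀ s ∈ Set.Icc (0:ℝ) 1, p + s • d ∈ DF := fun s hs =>
      hball (mem_closedBall_iff_norm.mpr (hsegR s hs))
    have hcont : ContinuousOn (fun s : ℝ => B ((F' (p + s • d)) d)) (Set.Icc 0 1) := by
      apply B.continuous.comp_continuousOn
      apply ContinuousOn.clm_apply ?_ continuousOn_const
      exact hFcont.comp
        ((continuous_const.add (continuous_id.smul continuous_const)).continuousOn) hmem
    have hInt : IntervalIntegrable (fun s : ℝ => B ((F' (p + s • d)) d)) volume 0 1 := by
      apply ContinuousOn.intervalIntegrable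
      rwa [Set.uIcc_of_le zero_le_one]
    refine ⟨hInt, ?_⟩
    have hderiv : ∀ s ∈ Set.uIcc (0:ℝ) 1,
        HasDerivAt (fun s : ℝ => B (F (p + s • d))) (B ((F' (p + s • d)) d)) s := by
      intro s hs
      rw [Set.uIcc_of_le zero_le_one] at hs
      have h1 : HasDerivAt (fun s : ℝ => p + s • d) d s := by
        simpa using ((hasDerivAt_id s).smul_const d).const_add p
      have h2 : HasDerivAt (fun s : ℝ => F (p + s • d)) ((F' (p + s • d)) d) s :=
        (hFderiv _ (hmem s hs)).comp_hasDerivAt s h1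
      exact B.hasFDerivAt.comp_hasDerivAt s h2
    have h := intervalIntegral.integral_eq_sub_of_hasDerivAt hderiv hInt
    simpa using h.symm
  -- the main induction
  have hx_le : ∀ k, ‖x (k+1) - x k‖ ≤ t (k+1) - t k ∧ ‖x k - x₀‖ ≤ t k := by
    intro k; induction k with
    | zero =>
      constructor
      · obtain ⟨A, hA1, hA2, hrec⟩ := hxrec 0
        have hAB : A (F (x 0)) = B (F (x 0)) := by
          have he : (F' x₀) (A (F (x 0))) = F (x 0) := by rw [← hx0]; exact hA1 _
          calc A (F (x 0)) = B ((F' x₀) (A (F (x 0)))) := (hB₂ _).symm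
            _ = B (F (x 0)) := by rw [he]
        have : x 1 - x 0 = -(A (F (x 0))) := by rw [hrec]; abel
        rw [this, norm_neg, hAB, hx0, htsucc, ht0, hψ0]
        simpa using hη0
      · rw [hx0, ht0]; simp
    | succ k ih =>
      obtain ⟨h1, h2⟩ := ih
      have h3 : ‖x (k+1) - x₀‖ ≤ t (k+1) := by
        calc ‖x (k+1) - x₀‖ = ‖(x (k+1) - x k) + (x k - x₀)‖ := by abel_nf
          _ ≤ ‖x (k+1) - x k‖ + ‖x k - x₀‖ := norm_add_le _ _
          _ ≤ (t (k+1) - t k) + t k := add_le_add h1 h2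
          _ = t (k+1) := by ring
      refine ⟨?_, h3⟩
      obtain ⟨Ak, hAk1, hAk2, hreck⟩ := hxrec k
      obtain ⟨Ak1, hAk11, hAk12, hreck1⟩ := hxrec (k+1)
      set d := x (k+1) - x k with hd
      set Δ := t (k+1) - t k with hΔ
      have hΔnn : 0 ≤ Δ := by rw [hΔ]; linarith [htmono k]
      have hdle : ‖d‖ ≤ Δ := h1
      have hFd : (F' (x k)) d = -(F (x k)) := by
        have e : d = -(Ak (F (x k))) := by rw [hd, hreck]; abel
        rw [e, map_neg, hAk1]
      have hseg : ∀ s ∈ Set.Icc (0:ℝ) 1, ‖x k + s • d - x₀‖ ≤ t k + s * Δ := by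
        intro s hs
        calc ‖x k + s • d - x₀‖ = ‖(x k - x₀) + s • d‖ := by
              congr 1; abel
          _ ≤ ‖x k - x₀‖ + ‖s • d‖ := norm_add_le _ _
          _ = ‖x k - x₀‖ + s * ‖d‖ := by rw [norm_smul, Real.norm_of_nonneg hs.1]
          _ ≤ t k + s * Δ := add_le_add h2 (mul_le_mul_of_nonneg_left hdle hs.1)
      have hsegv : ∀ s ∈ Set.Icc (0:ℝ) 1, t k + s * Δ ≤ t (k+1) := by
        intro s hs
        have := hs.1; have := hs.2
        nlinarith [hΔnn]
      have hsegR : ∀ s ∈ Set.Icc (0:ℝ) 1, ‖x k + s • d - x₀‖ ≤ R :=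
        fun s hs => (hseg s hs).trans ((hsegv s hs).trans ((htv (k+1)).trans hvstar₂))
      obtain ⟨hInt1, hFTC1⟩ := hFTC (x k) d hsegR
      rw [show x k + d = x (k+1) by rw [hd]; abel] at hFTC1
      have hBF : B (F (x (k+1))) = ∫ s in (0:ℝ)..1,
          (B ((F' (x k + s • d)) d) - B ((F' (x k)) d)) := by
        rw [intervalIntegral.integral_sub hInt1 intervalIntegrable_const,
            intervalIntegral.integral_const, ← hFTC1]
        have hBk : B (F (x k)) = -(B ((F' (x k)) d)) := by
          rw [show F (x k) = -((F' (x k)) d) by rw [hFd, neg_neg], map_neg]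
        rw [hBk]
        simp
      have haff : ∀ s ∈ Set.Icc (0:ℝ) 1, Δ * s + t k ∈ Set.Icc (0:ℝ) R := by
        intro s hs
        constructor
        · nlinarith [htnn k, hΔnn, hs.1]
        · have h5 := hsegv s hs
          have h6 := (htv (k+1)).trans hvstar₂
          nlinarith [hs.1, hs.2]
      have hcont0 : ContinuousOn (fun s : ℝ => ω₀ (Δ * s + t k)) (Set.Icc 0 1) :=
        hωcont.comp ((continuous_const.mul continuous_id).add continuous_const).continuousOn haff
      have h0Int : IntervalIntegrable (fun s : ℝ => ω₀ (Δ * s + t k)) volume 0 1 := by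
        apply ContinuousOn.intervalIntegrable
        rwa [Set.uIcc_of_le zero_le_one]
      have hbInt : IntervalIntegrable (fun s : ℝ => ω₀ (Δ * s + t k) + ω₀ (t k)) volume 0 1 :=
        h0Int.add intervalIntegrable_const
      have hgInt : IntervalIntegrable (fun s : ℝ => (ω₀ (Δ * s + t k) + ω₀ (t k)) * ‖d‖) volume 0 1 :=
        hbInt.mul_const _
      have hg2Int : IntervalIntegrable (fun s : ℝ => (ω₀ (Δ * s + t k) + ω₀ (t k)) * Δ) volume 0 1 :=
        hbInt.mul_const _
      have hfInt : IntervalIntegrable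
          (fun s : ℝ => B ((F' (x k + s • d)) d) - B ((F' (x k)) d)) volume 0 1 :=
        hInt1.sub intervalIntegrable_const
      have hptw : ∀ s ∈ Set.Icc (0:ℝ) 1,
          ‖B ((F' (x k + s • d)) d) - B ((F' (x k)) d)‖ ≤ (ω₀ (Δ * s + t k) + ω₀ (t k)) * ‖d‖ := by
        intro s hs
        have e : B ((F' (x k + s • d)) d) - B ((F' (x k)) d)
            = (B.comp (F' (x k + s • d) - F' x₀)) d - (B.comp (F' (x k) - F' x₀)) d := by
          simp [ContinuousLinearMap.comp_apply, ContinuousLinearMap.sub_apply, map_sub]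
        have harg : ‖x k + s • d - x₀‖ ≤ Δ * s + t k := by
          have h7 := hseg s hs
          have h8 : s * Δ = Δ * s := mul_comm s Δ
          linarith
        have hb1 : ‖(B.comp (F' (x k + s • d) - F' x₀)) d‖ ≤ ω₀ (Δ * s + t k) * ‖d‖ :=
          le_trans (ContinuousLinearMap.le_opNorm _ _)
            (mul_le_mul_of_nonneg_right (hbound _ _ harg (haff s hs).2) (norm_nonneg d))
        have hb2 : ‖(B.comp (F' (x k) - F' x₀)) d‖ ≤ ω₀ (t k) * ‖d‖ :=
          le_trans (ContinuousLinearMap.le_opNorm _ _)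
            (mul_le_mul_of_nonneg_right (hbound _ _ h2 ((htv k).trans hvstar₂)) (norm_nonneg d))
        rw [e]
        calc ‖(B.comp (F' (x k + s • d) - F' x₀)) d - (B.comp (F' (x k) - F' x₀)) d‖
            ≤ ‖(B.comp (F' (x k + s • d) - F' x₀)) d‖ + ‖(B.comp (F' (x k) - F' x₀)) d‖ :=
              norm_sub_le _ _
          _ ≤ ω₀ (Δ * s + t k) * ‖d‖ + ω₀ (t k) * ‖d‖ := add_le_add hb1 hb2
          _ = (ω₀ (Δ * s + t k) + ω₀ (t k)) * ‖d‖ := by ring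
      have hnormBF : ‖B (F (x (k+1)))‖ ≤ ∫ s in (0:ℝ)..1, (ω₀ (Δ * s + t k) + ω₀ (t k)) * ‖d‖ := by
        rw [hBF]
        calc ‖∫ s in (0:ℝ)..1, (B ((F' (x k + s • d)) d) - B ((F' (x k)) d))‖
            ≤ ∫ s in (0:ℝ)..1, ‖B ((F' (x k + s • d)) d) - B ((F' (x k)) d)‖ :=
              intervalIntegral.norm_integral_le_integral_norm zero_le_one
          _ ≤ _ := intervalIntegral.integral_mono_on zero_le_one hfInt.norm hgInt hptw
      have hmono12 : (∫ s in (0:ℝ)..1, (ω₀ (Δ * s + t k) + ω₀ (t k)) * ‖d‖)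
          ≤ ∫ s in (0:ℝ)..1, (ω₀ (Δ * s + t k) + ω₀ (t k)) * Δ := by
        apply intervalIntegral.integral_mono_on zero_le_one hgInt hg2Int
        intro s hs
        have hnn : 0 ≤ ω₀ (Δ * s + t k) + ω₀ (t k) :=
          add_nonneg (hωnn _ (haff s hs)) (hωnn _ ⟨htnn k, (htv k).trans hvstar₂⟩)
        exact mul_le_mul_of_nonneg_left hdle hnn
      have hval2 : (∫ s in (0:ℝ)..1, (ω₀ (Δ * s + t k) + ω₀ (t k)) * Δ)
          = (∫ l in (t k)..(t (k+1)), ω₀ l) + ω₀ (t k) * Δ := by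
        rw [intervalIntegral.integral_mul_const,
            intervalIntegral.integral_add h0Int intervalIntegrable_const,
            intervalIntegral.integral_const]
        have hcmA := intervalIntegral.smul_integral_comp_mul_add (f := ω₀) (a := (0:ℝ)) (b := 1) Δ (t k)
        have e2 : Δ * 1 + t k = t (k+1) := by rw [hΔ]; ring
        have e3 : Δ * 0 + t k = t k := by ring
        rw [e2, e3, smul_eq_mul] at hcmA
        simp only [sub_zero, one_smul, smul_eq_mul]
        linear_combination hcmA
      have hmidle : ω₀ (t k) * Δ ≤ ∫ l in (t k)..(t (k+1)), ω₀ l := by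
        have hc : ∀ l ∈ Set.Icc (t k) (t (k+1)), ω₀ (t k) ≤ ω₀ l := fun l hl =>
          hωmono ⟨htnn k, (htv k).trans hvstar₂⟩
            ⟨(htnn k).trans hl.1, hl.2.trans ((htv (k+1)).trans hvstar₂)⟩ hl.1
        have hcm := intervalIntegral.integral_mono_on (htmono k) intervalIntegrable_const
          (hωInt (t k) (t (k+1)) (htnn k) (htmono k) ((htv (k+1)).trans hvstar₂)) hc
        rwa [intervalIntegral.integral_const, smul_eq_mul, ← hΔ, mul_comm] at hcm
      have hnormBF' : ‖B (F (x (k+1)))‖ ≤ 2 * ∫ l in (t k)..(t (k+1)), ω₀ l := by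
        linarith [hnormBF, hmono12, hval2.le, hval2.ge, hmidle]
      -- majorant recursion step
      have hβpos : 0 < 1 - ω₀ (t (k+1)) := hωpos _ (htnn (k+1)) (htv (k+1))
      have hαpos : 0 < 1 - ω₀ (t k) := hωpos _ (htnn k) (htv k)
      have hβα : 1 - ω₀ (t (k+1)) ≤ 1 - ω₀ (t k) := by
        have := hωmono ⟨htnn k, (htv k).trans hvstar₂⟩
          ⟨htnn (k+1), (htv (k+1)).trans hvstar₂⟩ (htmono k)
        linarith
      have hJknn : 0 ≤ ∫ l in (0:ℝ)..(t k), ω₀ l :=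
        hintnn 0 (t k) le_rfl (htnn k) ((htv k).trans hvstar₂)
      have hInn : 0 ≤ ∫ l in (t k)..(t (k+1)), ω₀ l :=
        hintnn (t k) (t (k+1)) (htnn k) (htmono k) ((htv (k+1)).trans hvstar₂)
      have hadj : (∫ l in (0:ℝ)..(t k), ω₀ l) + (∫ l in (t k)..(t (k+1)), ω₀ l)
          = ∫ l in (0:ℝ)..(t (k+1)), ω₀ l :=
        intervalIntegral.integral_add_adjacent_intervals
          (hωInt 0 (t k) le_rfl (htnn k) ((htv k).trans hvstar₂))
          (hωInt (t k) (t (k+1)) (htnn k) (htmono k) ((htv (k+1)).trans hvstar₂))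
      have hstep : 2 * (∫ l in (t k)..(t (k+1)), ω₀ l)
          ≤ (1 - ω₀ (t (k+1))) * (t (k+1+1) - t (k+1)) := by
        have e1 : t (k+1+1) = η + 2 * (1 - ω₀ (t (k+1)))⁻¹ *
            ((∫ l in (0:ℝ)..(t k), ω₀ l) + (∫ l in (t k)..(t (k+1)), ω₀ l)) := by
          rw [htsucc (k+1), hψdef, hadj]
        have e2 : t (k+1) = η + 2 * (1 - ω₀ (t k))⁻¹ * ∫ l in (0:ℝ)..(t k), ω₀ l := by
          rw [htsucc k, hψdef]
        have hβb : (1 - ω₀ (t (k+1))) * (1 - ω₀ (t (k+1)))⁻¹ = 1 :=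
          mul_inv_cancel₀ (ne_of_gt hβpos)
        have hβa : (1 - ω₀ (t (k+1))) * (1 - ω₀ (t k))⁻¹ ≤ 1 := by
          calc (1 - ω₀ (t (k+1))) * (1 - ω₀ (t k))⁻¹
              ≤ (1 - ω₀ (t k)) * (1 - ω₀ (t k))⁻¹ :=
                mul_le_mul_of_nonneg_right hβα (inv_nonneg.mpr hαpos.le)
            _ = 1 := mul_inv_cancel₀ (ne_of_gt hαpos)
        have estep : t (k+1+1) - t (k+1)
            = 2 * (1 - ω₀ (t (k+1)))⁻¹ *
                ((∫ l in (0:ℝ)..(t k), ω₀ l) + (∫ l in (t k)..(t (k+1)), ω₀ l))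
              - 2 * (1 - ω₀ (t k))⁻¹ * ∫ l in (0:ℝ)..(t k), ω₀ l := by
          linear_combination e1 - e2
        rw [estep]
        have h4 : (1 - ω₀ (t (k+1))) * ((1 - ω₀ (t (k+1)))⁻¹ *
            ((∫ l in (0:ℝ)..(t k), ω₀ l) + (∫ l in (t k)..(t (k+1)), ω₀ l)))
            = (∫ l in (0:ℝ)..(t k), ω₀ l) + (∫ l in (t k)..(t (k+1)), ω₀ l) := by
          rw [← mul_assoc, hβb, one_mul]
        have h5 : (1 - ω₀ (t (k+1))) * ((1 - ω₀ (t k))⁻¹ * (∫ l in (0:ℝ)..(t k), ω₀ l))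
            ≤ ∫ l in (0:ℝ)..(t k), ω₀ l := by
          rw [← mul_assoc]
          nlinarith [hβa, hJknn]
        nlinarith [h4, h5]
      have hfin : x (k+1+1) - x (k+1) = -(Ak1 (F (x (k+1)))) := by
        rw [hreck1]; abel
      have hAb := hAbound (x (k+1)) Ak1 hAk11 (t (k+1)) h3 (htv (k+1)) (F (x (k+1)))
      rw [hfin, norm_neg]
      have h2I : (1 - ω₀ (t (k+1))) * ‖Ak1 (F (x (k+1)))‖
          ≤ (1 - ω₀ (t (k+1))) * (t (k+1+1) - t (k+1)) := by
        calc (1 - ω₀ (t (k+1))) * ‖Ak1 (F (x (k+1)))‖ ≤ ‖B (F (x (k+1)))‖ := hAb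
          _ ≤ 2 * ∫ l in (t k)..(t (k+1)), ω₀ l := hnormBF'
          _ ≤ _ := hstep
      exact le_of_mul_le_mul_left h2I hβpos
  -- x* lies in the closed ball of radius vstar
  have hxk_ball : ∀ k, ‖x k - x₀‖ ≤ vstar := fun k => ((hx_le k).2).trans (htv k)
  have hxs : ‖xstar - x₀‖ ≤ vstar := by
    have h1 : Tendsto (fun k => ‖x k - x₀‖) atTop (nhds ‖xstar - x₀‖) :=
      ((hlim.sub_const x₀).norm)
    exact le_of_tendsto h1 (Eventually.of_forall hxk_ball)
  -- uniqueness
  intro z hz hFz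
  have hzn : ‖z - x₀‖ < vstar := mem_ball_iff_norm.mp hz
  set d := z - xstar with hd
  have hseg : ∀ s ∈ Set.Icc (0:ℝ) 1, ‖xstar + s • d - x₀‖ ≤ vstar := by
    intro s hs
    have e : xstar + s • d - x₀ = (1 - s) • (xstar - x₀) + s • (z - x₀) := by
      rw [hd]; module
    rw [e]
    have h1s : (0:ℝ) ≤ 1 - s := by linarith [hs.2]
    calc ‖(1 - s) • (xstar - x₀) + s • (z - x₀)‖
        ≤ ‖(1 - s) • (xstar - x₀)‖ + ‖s • (z - x₀)‖ := norm_add_le _ _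
      _ = (1 - s) * ‖xstar - x₀‖ + s * ‖z - x₀‖ := by
          rw [norm_smul, norm_smul, Real.norm_of_nonneg h1s, Real.norm_of_nonneg hs.1]
      _ ≤ (1 - s) * vstar + s * vstar := by
          have := mul_le_mul_of_nonneg_left hxs h1s
          have := mul_le_mul_of_nonneg_left hzn.le hs.1
          linarith
      _ = vstar := by ring
  obtain ⟨hIntu, hFTCu⟩ := hFTC xstar d (fun s hs => (hseg s hs).trans hvstar₂)
  rw [show xstar + d = z by rw [hd]; abel, hFz, hsol, map_zero, sub_zero] at hFTCu
  -- 0 = ∫₀¹ B (F'(ps) d)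
  have hsplit : ∀ s : ℝ, B ((F' (xstar + s • d)) d)
      = (B.comp (F' (xstar + s • d) - F' x₀)) d + d := by
    intro s
    simp [ContinuousLinearMap.comp_apply, ContinuousLinearMap.sub_apply, map_sub, hB₂]
  have hIntw : IntervalIntegrable
      (fun s : ℝ => (B.comp (F' (xstar + s • d) - F' x₀)) d) volume 0 1 := by
    have e : (fun s : ℝ => (B.comp (F' (xstar + s • d) - F' x₀)) d)
        = fun s : ℝ => B ((F' (xstar + s • d)) d) - d := by
      funext s; rw [hsplit s]; abel
    rw [e]
    exact hIntu.sub intervalIntegrable_const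
  have key : (0:X) = (∫ s in (0:ℝ)..1, (B.comp (F' (xstar + s • d) - F' x₀)) d) + d := by
    rw [hFTCu]
    have e : (fun s : ℝ => B ((F' (xstar + s • d)) d))
        = fun s : ℝ => (B.comp (F' (xstar + s • d) - F' x₀)) d + d := by
      funext s; exact hsplit s
    rw [e, intervalIntegral.integral_add hIntw intervalIntegrable_const,
        intervalIntegral.integral_const]
    simp
  have hbnd : ‖∫ s in (0:ℝ)..1, (B.comp (F' (xstar + s • d) - F' x₀)) d‖
      ≤ ω₀ vstar * ‖d‖ * |1 - 0| := by
    apply intervalIntegral.norm_integral_le_of_norm_le_const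
    intro s hs
    have hs' : s ∈ Set.Icc (0:ℝ) 1 := by
      rw [Set.uIoc_of_le zero_le_one] at hs
      exact ⟨hs.1.le, hs.2⟩
    exact le_trans (ContinuousLinearMap.le_opNorm _ _)
      (mul_le_mul_of_nonneg_right (hbound _ _ (hseg s hs') hvstar₂) (norm_nonneg d))
  have hdz : ‖d‖ ≤ ω₀ vstar * ‖d‖ := by
    have e : d = -(∫ s in (0:ℝ)..1, (B.comp (F' (xstar + s • d) - F' x₀)) d) := by
      have := key; rw [eq_comm, add_comm, ← eq_neg_iff_add_eq_zero] at this
      exact this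
    have e2 : ‖d‖ = ‖∫ s in (0:ℝ)..1, (B.comp (F' (xstar + s • d) - F' x₀)) d‖ := by
      conv_lhs => rw [e]
      exact norm_neg _
    calc ‖d‖ = ‖∫ s in (0:ℝ)..1, (B.comp (F' (xstar + s • d) - F' x₀)) d‖ := e2
      _ ≤ ω₀ vstar * ‖d‖ * |1 - 0| := hbnd
      _ = ω₀ vstar * ‖d‖ := by simp
  have : ‖d‖ = 0 := by nlinarith [norm_nonneg d]
  have : d = 0 := norm_eq_zero.mp this
  rw [hd, sub_eq_zero] at this
  exact this
end

section
/- Let Ω(t, s, r) ≥ 0 be continuous and non-decreasing in each of its arguments t, s, r ∈ [0, R], let ψ : [0, R] → [0, ∞) be continuous and non-decreasing, and suppose Ω(t, t + r, r) ≤ ψ(t + r) − ψ(r) for all r ∈ [0, R] and t ∈ [0, R − r]. Define sequences by u₀ = v₀ = 0, u₁ = v₁ = ψ(0) = η ≥ 0, u_{k+1} = u_k + Ω(u_k − u_{k−1}, u_k, u_{k−1}) for k ≥ 1, and v_{k+1} = ψ(v_k) for k ≥ 0, and assume both sequences remain in [0, R]. Then u_k − u_{k−1} ≤ v_k − v_{k−1}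 for all k ≥ 1, and consequently u_k ≤ v_k for all k ≥ 0. -/
/-- If `Ω(t, s, r) ≥ 0` is continuous and non-decreasing in each argument on `[0, R]`,
`ψ` is continuous and non-decreasing on `[0, R]`, and
`Ω(t, t + r, r) ≤ ψ(t + r) − ψ(r)` for all `r ∈ [0, R]`, `t ∈ [0, R − r]`, then the
sequences `u₀ = v₀ = 0`, `u₁ = v₁ = ψ(0) = η`, `u_{k+1} = u_k + Ω(u_k − u_{k−1}, u_k, u_{k−1})`,
`v_{k+1} = ψ(v_k)` (assumed to stay in `[0, R]`) satisfy
`u_k − u_{k−1} ≤ v_k − v_{k−1}` for all `k ≥ 1`, hence `u_k ≤ v_k` for all `k ≥ 0`. -/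
theorem majorant_comparison_of_recurrences
    (R η : ℝ) (hR : 0 < R) (hη : 0 ≤ η)
    (Ω : ℝ → ℝ → ℝ → ℝ)
    (hΩnn : ∀ t ∈ Set.Icc (0:ℝ) R, ∀ s ∈ Set.Icc (0:ℝ) R, ∀ r ∈ Set.Icc (0:ℝ) R,
        0 ≤ Ω t s r)
    (hΩcont_t : ∀ s ∈ Set.Icc (0:ℝ) R, ∀ r ∈ Set.Icc (0:ℝ) R,
        ContinuousOn (fun t => Ω t s r) (Set.Icc 0 R))
    (hΩcont_s : ∀ t ∈ Set.Icc (0:ℝ) R, ∀ r ∈ Set.Icc (0:ℝ) R,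
        ContinuousOn (fun s => Ω t s r) (Set.Icc 0 R))
    (hΩcont_r : ∀ t ∈ Set.Icc (0:ℝ) R, ∀ s ∈ Set.Icc (0:ℝ) R,
        ContinuousOn (fun r => Ω t s r) (Set.Icc 0 R))
    (hΩmono_t : ∀ s ∈ Set.Icc (0:ℝ) R, ∀ r ∈ Set.Icc (0:ℝ) R,
        MonotoneOn (fun t => Ω t s r) (Set.Icc 0 R))
    (hΩmono_s : ∀ t ∈ Set.Icc (0:ℝ) R, ∀ r ∈ Set.Icc (0:ℝ) R,
        MonotoneOn (fun s => Ω t s r) (Set.Icc 0 R))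
    (hΩmono_r : ∀ t ∈ Set.Icc (0:ℝ) R, ∀ s ∈ Set.Icc (0:ℝ) R,
        MonotoneOn (fun r => Ω t s r) (Set.Icc 0 R))
    (ψ : ℝ → ℝ)
    (hψcont : ContinuousOn ψ (Set.Icc 0 R))
    (hψmono : MonotoneOn ψ (Set.Icc 0 R))
    (hψnn : ∀ u ∈ Set.Icc (0:ℝ) R, 0 ≤ ψ u)
    (hΩψ : ∀ r ∈ Set.Icc (0:ℝ) R, ∀ t ∈ Set.Icc (0:ℝ) (R - r),
        Ω t (t + r) r ≤ ψ (t + r) - ψ r)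
    (hψ0 : ψ 0 = η)
    (u v : ℕ → ℝ)
    (hu0 : u 0 = 0) (hv0 : v 0 = 0) (hu1 : u 1 = η) (hv1 : v 1 = η)
    (hurec : ∀ k, u (k + 2) = u (k + 1) + Ω (u (k + 1) - u k) (u (k + 1)) (u k))
    (hvrec : ∀ k, v (k + 1) = ψ (v k))
    (huIcc : ∀ k, u k ∈ Set.Icc (0:ℝ) R)
    (hvIcc : ∀ k, v k ∈ Set.Icc (0:ℝ) R) :
    (∀ k, u (k + 1) - u k ≤ v (k + 1) - v k) ∧ ∀ k, u k ≤ v k := by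
  have key : ∀ k, 0 ≤ u (k+1) - u k ∧ 0 ≤ v (k+1) - v k ∧
      u (k+1) - u k ≤ v (k+1) - v k ∧ u k ≤ v k := by
    intro k
    induction k with
    | zero => simp [hu0, hv0, hu1, hv1, hη]
    | succ k ih =>
      obtain ⟨hdu, hdv, hduv, huv⟩ := ih
      have huk := huIcc k; have huk1 := huIcc (k+1)
      have hvk := hvIcc k; have hvk1 := hvIcc (k+1)
      have hduIcc : u (k+1) - u k ∈ Set.Icc (0:ℝ) R :=
        ⟨hdu, by have := huk.1; have := huk1.2; linarith⟩
      have hdvIcc : v (k+1) - v k ∈ Set.Icc (0:ℝ) R :=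
        ⟨hdv, by have := hvk.1; have := hvk1.2; linarith⟩
      have huv1 : u (k+1) ≤ v (k+1) := by linarith
      have h1 : Ω (u (k+1) - u k) (u (k+1)) (u k) ≤ Ω (v (k+1) - v k) (v (k+1)) (v k) :=
        calc Ω (u (k+1) - u k) (u (k+1)) (u k)
            ≤ Ω (v (k+1) - v k) (u (k+1)) (u k) :=
              hΩmono_t _ huk1 _ huk hduIcc hdvIcc hduv
          _ ≤ Ω (v (k+1) - v k) (v (k+1)) (u k) :=
              hΩmono_s _ hdvIcc _ huk huk1 hvk1 huv1
          _ ≤ Ω (v (k+1) - v k) (v (k+1)) (v k) :=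
              hΩmono_r _ hdvIcc _ hvk1 huk hvk huv
      have h2 : Ω (v (k+1) - v k) (v (k+1)) (v k) ≤ ψ (v (k+1)) - ψ (v k) := by
        have := hΩψ (v k) hvk (v (k+1) - v k) ⟨hdv, by have := hvk1.2; linarith⟩
        rwa [show v (k+1) - v k + v k = v (k+1) by ring] at this
      have hψuv : ψ (v k) ≤ ψ (v (k+1)) := hψmono hvk hvk1 (by linarith)
      have hΩ0 : 0 ≤ Ω (u (k+1) - u k) (u (k+1)) (u k) :=
        hΩnn _ hduIcc _ huk1 _ huk
      have hur := hurec k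
      have hvr1 := hvrec (k+1)
      have hvr0 := hvrec k
      refine ⟨by linarith, by linarith, by linarith, huv1⟩
  exact ⟨fun k => (key k).2.2.1, fun k => (key k).2.2.2⟩
end

section
/- Let ω₀ : [0, R] → [0, ∞) be continuous and non-decreasing with ω₀(0) = 0 and ω₀(s) < 1 for all relevant s, and set γ(s) = (1 − ω₀(s))⁻¹ and Ω(t, s, r) = γ(s)·(∫_r^{r+t} ω₀(l) dl + ω₀(r)·t). Then for all r, t ≥ 0 with r + t ≤ R and all s with r ≤ s ≤ R, one has Ω(t, s, r) ≤ 2γ(s)·∫_0^{r+t} ω₀(l) dl − 2γ(r)·∫_0^r ω₀(l) dl. In particular, choosing s = r + t, Ω(t, t + r, r) ≤ ψ(t + r) − ψ(r) − 0, where ψ(v) = η + 2(1 − ω₀(v))⁻¹ · ∫_0^v ω₀(l) dl for any fixed η ≥ 0. -/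
/-- With `γ(s) = (1 − ω₀(s))⁻¹` and
`Ω(t, s, r) = γ(s)·(∫_r^{r+t} ω₀ + ω₀(r)·t)`, for all `r, t ≥ 0` with `r + t ≤ R` and all
`s` with `r ≤ s ≤ R`, one has
`Ω(t, s, r) ≤ 2γ(s)·∫_0^{r+t} ω₀ − 2γ(r)·∫_0^r ω₀`; in particular, taking `s = r + t`,
`Ω(t, t + r, r) ≤ ψ(t + r) − ψ(r)` where `ψ(v) = η + 2(1 − ω₀(v))⁻¹·∫_0^v ω₀`. -/
theorem Omega_first_integral_majorant
    (R η : ℝ) (hR : 0 < R) (hη : 0 ≤ η)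
    (ω₀ : ℝ → ℝ)
    (hωcont : ContinuousOn ω₀ (Set.Icc 0 R))
    (hωmono : MonotoneOn ω₀ (Set.Icc 0 R))
    (hωnn : ∀ r ∈ Set.Icc (0:ℝ) R, 0 ≤ ω₀ r)
    (hω0 : ω₀ 0 = 0)
    (hωlt1 : ∀ s ∈ Set.Icc (0:ℝ) R, ω₀ s < 1)
    (γ : ℝ → ℝ) (hγ : ∀ s, γ s = (1 - ω₀ s)⁻¹)
    (Ω : ℝ → ℝ → ℝ → ℝ)
    (hΩ : ∀ t s r, Ω t s r = γ s * ((∫ l in r..(r + t), ω₀ l) + ω₀ r * t))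
    (ψ : ℝ → ℝ)
    (hψ : ∀ u, ψ u = η + 2 * (1 - ω₀ u)⁻¹ * ∫ l in (0:ℝ)..u, ω₀ l) :
    (∀ r t : ℝ, 0 ≤ r → 0 ≤ t → r + t ≤ R → ∀ s : ℝ, r ≤ s → s ≤ R →
      Ω t s r ≤ 2 * γ s * (∫ l in (0:ℝ)..(r + t), ω₀ l)
          - 2 * γ r * (∫ l in (0:ℝ)..r, ω₀ l)) ∧
    (∀ r t : ℝ, 0 ≤ r → 0 ≤ t → r + t ≤ R →
      Ω t (t + r) r ≤ ψ (t + r) - ψ r) := by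
  have hint : ∀ a b : ℝ, 0 ≤ a → a ≤ b → b ≤ R → IntervalIntegrable ω₀ MeasureTheory.volume a b := by
    intro a b ha hab hbR
    apply ContinuousOn.intervalIntegrable
    apply hωcont.mono
    rw [Set.uIcc_of_le hab]
    exact Set.Icc_subset_Icc ha hbR
  have main : ∀ r t : ℝ, 0 ≤ r → 0 ≤ t → r + t ≤ R → ∀ s : ℝ, r ≤ s → s ≤ R →
      Ω t s r ≤ 2 * γ s * (∫ l in (0:ℝ)..(r + t), ω₀ l)
          - 2 * γ r * (∫ l in (0:ℝ)..r, ω₀ l) := by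
    intro r t hr ht hrtR s hrs hsR
    have hrR : r ≤ R := le_trans (by linarith) hrtR
    have hsmem : s ∈ Set.Icc (0:ℝ) R := ⟨le_trans hr hrs, hsR⟩
    have hrmem : r ∈ Set.Icc (0:ℝ) R := ⟨hr, hrR⟩
    have hωs : ω₀ s < 1 := hωlt1 s hsmem
    have hωr : ω₀ r < 1 := hωlt1 r hrmem
    have hγs : 0 < γ s := by rw [hγ]; exact inv_pos.mpr (by linarith)
    have hγrs : γ r ≤ γ s := by
      rw [hγ, hγ]
      have h1 : ω₀ r ≤ ω₀ s := hωmono hrmem hsmem hrs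
      have : (0:ℝ) < 1 - ω₀ s := by linarith
      exact inv_anti₀ this (by linarith)
    have hsplit : (∫ l in (0:ℝ)..r, ω₀ l) + (∫ l in r..(r + t), ω₀ l)
        = ∫ l in (0:ℝ)..(r + t), ω₀ l :=
      intervalIntegral.integral_add_adjacent_intervals
        (hint 0 r le_rfl hr hrR) (hint r (r + t) hr (by linarith) hrtR)
    have hA : 0 ≤ ∫ l in (0:ℝ)..r, ω₀ l := by
      apply intervalIntegral.integral_nonneg hr
      intro u hu
      exact hωnn u ⟨hu.1, le_trans hu.2 hrR⟩
    have hconst : ω₀ r * t ≤ ∫ l in r..(r + t), ω₀ l := by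
      have := intervalIntegral.integral_mono_on (by linarith : r ≤ r + t)
        (intervalIntegrable_const (c := ω₀ r)) (hint r (r + t) hr (by linarith) hrtR)
        (fun u hu => hωmono hrmem ⟨le_trans hr hu.1, le_trans hu.2 hrtR⟩ hu.1)
      simpa [mul_comm] using this
    rw [hΩ, ← hsplit]
    nlinarith [mul_le_mul_of_nonneg_left hconst (le_of_lt hγs),
      mul_le_mul_of_nonneg_right hγrs hA]
  refine ⟨main, fun r t hr ht hrtR => ?_⟩
  have := main r t hr ht hrtR (r + t) (by linarith) hrtR
  rw [hψ, hψ]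
  have hc : t + r = r + t := by ring
  rw [hc]
  have hγrt := hγ (r + t)
  have hγr := hγ r
  rw [hγrt, hγr] at this
  linarith [this]
end

section
/- Let η > 0, R > 0, and let ω₀ : [0, R] → [0, ∞) be continuous and non-decreasing with ω₀(0) = 0. Suppose v₁* ∈ (η, R] satisfies the (cleared-denominator form of the) fixed point equation v₁*·(1 − ω₀(v₁*)) = η·(1 − ω₀(v₁*)) + 2·∫₀^{v₁*} ω₀(l) dl. Then 0 < ω₀(v₁*) < 1. -/
/-- If `v₁* ∈ (η, R]` satisfies the cleared-denominator form of the fixed point equation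
`v₁*·(1 − ω₀(v₁*)) = η·(1 − ω₀(v₁*)) + 2·∫_0^{v₁*} ω₀(l) dl`, then `0 < ω₀(v₁*) < 1`. -/
theorem omega_at_fixed_point_in_open_unit_interval
    (R η : ℝ) (hη : 0 < η) (hR : 0 < R)
    (ω₀ : ℝ → ℝ)
    (hωcont : ContinuousOn ω₀ (Set.Icc 0 R))
    (hωmono : MonotoneOn ω₀ (Set.Icc 0 R))
    (hωnn : ∀ r ∈ Set.Icc (0:ℝ) R, 0 ≤ ω₀ r)
    (hω0 : ω₀ 0 = 0)
    (vstar : ℝ) (hvstar₁ : η < vstar) (hvstar₂ : vstar ≤ R)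
    (hfix : vstar * (1 - ω₀ vstar) =
        η * (1 - ω₀ vstar) + 2 * ∫ l in (0:ℝ)..vstar, ω₀ l) :
    0 < ω₀ vstar ∧ ω₀ vstar < 1 := by
  have hv0 : 0 < vstar := hη.trans hvstar₁
  have hvmem : vstar ∈ Set.Icc (0:ℝ) R := ⟨hv0.le, hvstar₂⟩
  have hsub : Set.uIcc (0:ℝ) vstar ⊆ Set.Icc 0 R := by
    rw [Set.uIcc_of_le hv0.le]
    exact Set.Icc_subset_Icc le_rfl hvstar₂
  -- ω₀ vstar > 0
  have hωpos : 0 < ω₀ vstar := by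
    rcases lt_or_eq_of_le (hωnn vstar hvmem) with h | h
    · exact h
    · exfalso
      have hzero : ∀ l ∈ Set.uIcc (0:ℝ) vstar, ω₀ l = 0 := by
        intro l hl
        have hlR : l ∈ Set.Icc (0:ℝ) R := hsub hl
        rw [Set.uIcc_of_le hv0.le] at hl
        have h1 : ω₀ l ≤ ω₀ vstar := hωmono hlR hvmem hl.2
        have h2 : 0 ≤ ω₀ l := hωnn l hlR
        rw [← h] at h1
        linarith
      have hI : (∫ l in (0:ℝ)..vstar, ω₀ l) = 0 := by
        rw [intervalIntegral.integral_congr hzero]; simp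
      rw [hI, ← h] at hfix
      norm_num at hfix
      linarith
  -- the integral is positive
  have hε : (0:ℝ) < ω₀ vstar / 2 := by linarith
  obtain ⟨δ, hδ, hball⟩ :=
    Metric.continuousWithinAt_iff.mp (hωcont vstar hvmem) (ω₀ vstar / 2) hε
  set t : ℝ := max (vstar / 2) (vstar - δ / 2) with ht_def
  have ht0 : 0 < t := lt_of_lt_of_le (by linarith) (le_max_left _ _)
  have htlt : t < vstar := by
    apply max_lt <;> linarith
  have htR : t ∈ Set.Icc (0:ℝ) R := ⟨ht0.le, le_trans htlt.le hvstar₂⟩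
  have hωt : ω₀ vstar / 2 < ω₀ t := by
    have hdist : dist t vstar < δ := by
      rw [Real.dist_eq, abs_of_nonpos (by linarith)]
      have : vstar - δ / 2 ≤ t := le_max_right _ _
      linarith
    have := hball htR hdist
    rw [Real.dist_eq] at this
    have := abs_lt.mp this
    linarith [this.1]
  have hint1 : IntervalIntegrable ω₀ MeasureTheory.volume 0 t := by
    apply (hωcont.mono _).intervalIntegrable
    rw [Set.uIcc_of_le ht0.le]
    exact Set.Icc_subset_Icc le_rfl htR.2
  have hint2 : IntervalIntegrable ω₀ MeasureTheory.volume t vstar := by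
    apply (hωcont.mono _).intervalIntegrable
    rw [Set.uIcc_of_le htlt.le]
    exact Set.Icc_subset_Icc ht0.le hvstar₂
  have hsplit : (∫ l in (0:ℝ)..vstar, ω₀ l)
      = (∫ l in (0:ℝ)..t, ω₀ l) + ∫ l in t..vstar, ω₀ l :=
    (intervalIntegral.integral_add_adjacent_intervals hint1 hint2).symm
  have hI1 : 0 ≤ ∫ l in (0:ℝ)..t, ω₀ l := by
    apply intervalIntegral.integral_nonneg ht0.le
    intro x hx
    exact hωnn x ⟨hx.1, le_trans hx.2 htR.2⟩
  have hI2 : (vstar - t) * (ω₀ vstar / 2) ≤ ∫ l in t..vstar, ω₀ l := by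
    have hconst : (∫ _ in t..vstar, (ω₀ vstar / 2)) = (vstar - t) * (ω₀ vstar / 2) := by
      simp [smul_eq_mul]; ring
    rw [← hconst]
    apply intervalIntegral.integral_mono_on htlt.le
      (intervalIntegrable_const) hint2
    intro x hx
    have hxR : x ∈ Set.Icc (0:ℝ) R := ⟨le_trans ht0.le hx.1, le_trans hx.2 hvstar₂⟩
    have : ω₀ t ≤ ω₀ x := hωmono htR hxR hx.1
    linarith
  have hIpos : 0 < ∫ l in (0:ℝ)..vstar, ω₀ l := by
    rw [hsplit]
    have : 0 < (vstar - t) * (ω₀ vstar / 2) :=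
      mul_pos (by linarith) hε
    linarith
  refine ⟨hωpos, ?_⟩
  nlinarith [hIpos, hfix]
end

section
/- Let η ≥ 0, R > 0, and let ω₀ : [0, R] → [0, ∞) be continuous and non-decreasing with ω₀(0) = 0 and ω₀(v) < 1 for all v ∈ [0, R]. Define f(v) = (1 − ω₀(v))⁻¹·( ∫₀^v ω₀(l) dl + ω₀(v)·v + η ) and ψ(v) = η + 2(1 − ω₀(v))⁻¹·∫₀^v ω₀(l) dl. Then f(v) ≥ ψ(v) for every v ∈ [0, R]. Moreover, if η > 0 and ω₀ is strictly increasing (so that ω₀(v) > 0 for v > 0), then f(v) > ψ(v) for every v ∈ (0, R]. -/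
/-- With `f(v) = (1 − ω₀(v))⁻¹·(∫_0^v ω₀ + ω₀(v)·v + η)` (Argyros) and
`ψ(v) = η + 2(1 − ω₀(v))⁻¹·∫_0^v ω₀` (present paper), one has `f(v) ≥ ψ(v)` on `[0, R]`;
moreover, if `η > 0` and `ω₀` is strictly increasing, then `f(v) > ψ(v)` on `(0, R]`. -/
theorem argyros_majorant_dominates_psi
    (R η : ℝ) (hR : 0 < R) (hη : 0 ≤ η)
    (ω₀ : ℝ → ℝ)
    (hωcont : ContinuousOn ω₀ (Set.Icc 0 R))
    (hωmono : MonotoneOn ω₀ (Set.Icc 0 R))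
    (hωnn : ∀ u ∈ Set.Icc (0:ℝ) R, 0 ≤ ω₀ u)
    (hω0 : ω₀ 0 = 0)
    (hωlt1 : ∀ u ∈ Set.Icc (0:ℝ) R, ω₀ u < 1)
    (f ψ : ℝ → ℝ)
    (hf : ∀ u, f u = (1 - ω₀ u)⁻¹ * ((∫ l in (0:ℝ)..u, ω₀ l) + ω₀ u * u + η))
    (hψ : ∀ u, ψ u = η + 2 * (1 - ω₀ u)⁻¹ * ∫ l in (0:ℝ)..u, ω₀ l) :
    (∀ u ∈ Set.Icc (0:ℝ) R, ψ u ≤ f u) ∧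
    (0 < η → StrictMonoOn ω₀ (Set.Icc 0 R) →
      ∀ u ∈ Set.Ioc (0:ℝ) R, ψ u < f u) := by
  -- key facts for u ∈ [0,R]
  have hint : ∀ u ∈ Set.Icc (0:ℝ) R, (∫ l in (0:ℝ)..u, ω₀ l) ≤ ω₀ u * u := by
    intro u hu
    obtain ⟨hu0, huR⟩ := hu
    have hsub : Set.Icc (0:ℝ) u ⊆ Set.Icc 0 R := Set.Icc_subset_Icc le_rfl huR
    have hInt : IntervalIntegrable ω₀ MeasureTheory.volume 0 u := by
      apply ContinuousOn.intervalIntegrable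
      rw [Set.uIcc_of_le hu0]
      exact hωcont.mono hsub
    have hconst : IntervalIntegrable (fun _ : ℝ => ω₀ u) MeasureTheory.volume 0 u :=
      intervalIntegrable_const
    have hmono : (∫ l in (0:ℝ)..u, ω₀ l) ≤ ∫ _ in (0:ℝ)..u, ω₀ u := by
      apply intervalIntegral.integral_mono_on hu0 hInt hconst
      intro x hx
      exact hωmono (hsub hx) ⟨hu0, huR⟩ hx.2
    calc (∫ l in (0:ℝ)..u, ω₀ l) ≤ ∫ _ in (0:ℝ)..u, ω₀ u := hmono
      _ = (u - 0) * ω₀ u := by rw [intervalIntegral.integral_const]; simp [smul_eq_mul]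
      _ = ω₀ u * u := by ring
  have hkey : ∀ u ∈ Set.Icc (0:ℝ) R,
      f u - ψ u = (1 - ω₀ u)⁻¹ * (ω₀ u * u + η * ω₀ u - ∫ l in (0:ℝ)..u, ω₀ l) := by
    intro u hu
    have h1 : (1 : ℝ) - ω₀ u ≠ 0 := by
      have := hωlt1 u hu; linarith
    rw [hf, hψ]
    field_simp
    ring
  constructor
  · intro u hu
    have h1 : (0:ℝ) < 1 - ω₀ u := by have := hωlt1 u hu; linarith
    have h2 := hint u hu
    have h3 : (0:ℝ) ≤ η * ω₀ u := mul_nonneg hη (hωnn u hu)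
    have h4 : 0 ≤ f u - ψ u := by
      rw [hkey u hu]
      exact mul_nonneg (le_of_lt (inv_pos.mpr h1)) (by linarith)
    linarith
  · intro hη' hstrict u hu
    have hu' : u ∈ Set.Icc (0:ℝ) R := ⟨le_of_lt hu.1, hu.2⟩
    have h1 : (0:ℝ) < 1 - ω₀ u := by have := hωlt1 u hu'; linarith
    have h2 := hint u hu'
    have hωpos : 0 < ω₀ u := by
      have := hstrict (Set.left_mem_Icc.mpr (le_of_lt hR)) hu' hu.1
      rwa [hω0] at this
    have h3 : (0:ℝ) < η * ω₀ u := mul_pos hη' hωpos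
    have h4 : 0 < f u - ψ u := by
      rw [hkey u hu']
      exact mul_pos (inv_pos.mpr h1) (by linarith)
    linarith
end
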